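/- Let α ∈ S_n satisfy condition (*), and let β ∈ S_{n+1} with Ψ_n(β) = α (i.e., β = [α, j] for some 0 ≤ j ≤ n in the cut-and-reconnect construction). Then β satisfies condition (*) if and only if j = 0 or j is a vertex in the chain of Q̂_α (equivalently, j lies in the cycle of α containing 1, or j = 0). -/

import Mathlib

/-- Two subsets of `{0, ..., m-1}` cross if there are `a < b < c < d` with
`a, c` in the first and `b, d` in the second. -/
def Crossing {m : ℕ} (A B : Set (Fin m)) : Prop :=
  ∃ a b c d : Fin m, a < b ∧ b < c ∧ c < d ∧ a ∈ A ∧ c ∈ A ∧ b ∈ B ∧ d ∈ B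

/-- Condition (*): every (nontrivial) cycle of the functional graph of `α`
(arrows `i → α i`) has exactly one ascent arrow (source smaller than target), and the
orbits of `α` (cycles, counting fixed points) are pairwise non-crossing. -/
def SatisfiesStar {m : ℕ} (α : Equiv.Perm (Fin m)) : Prop :=
  (∀ c ∈ α.cycleFactorsFinset, (c.support.filter fun i => i < c i).card = 1) ∧
  ∀ x y : Fin m, ¬ α.SameCycle x y →
    ¬ Crossing {z | α.SameCycle x z} {z | α.SameCycle y z}

/-- Number of cycles of `α`, counting fixed points as 1-cycles. -/
def cycleCount {m : ℕ} (α : Equiv.Perm (Fin m)) : ℕ :=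
  Multiset.card α.cycleType + (Finset.univ.filter fun x => α x = x).card

/-- Extension of `α ∈ S_m` to `S_{m+1}` fixing the new top element `Fin.last m`. -/
def liftPerm {m : ℕ} (α : Equiv.Perm (Fin m)) : Equiv.Perm (Fin (m + 1)) :=
  finSuccEquivLast.symm.permCongr α.optionCongr

/-- The "Case 0" construction `[α, 0]`: extend the chain of `Q̂_α` by a new arrow at the
top (here `0` plays the role of the paper's distinguished element `1`, and
`Fin.last m` the role of the new element `n+1`): the resulting permutation sends
`0 ↦ last`, `last ↦ α 0`, and agrees with `α` elsewhere. -/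
def chainExt {m : ℕ} (α : Equiv.Perm (Fin m)) : Equiv.Perm (Fin (m + 1)) :=
  liftPerm α * Equiv.swap 0 (Fin.last m)

/-- The cut-and-reconnect construction `[α, j]`: `insPerm α none = [α, 0]` (Case 0),
and for a target `j` of `Q̂_α`, `insPerm α (some j)` cuts the arrow `i → j` of `Q̂_α`
and reconnects via new arrows (virtual vertex) `→ j` and `i →` (new top vertex). -/
def insPerm {m : ℕ} (α : Equiv.Perm (Fin m)) : Option (Fin m) → Equiv.Perm (Fin (m + 1))
  | none => chainExt α
  | some j => Equiv.swap (Fin.last m) j.castSucc * chainExt α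

/-!
Under (*) each cycle of `α` runs down from its maximum to its minimum and returns by its single
ascent, and a descent never jumps over an element of its own cycle. So cutting the cycle of `0` at
`j` splits it into the elements `≤ j`, still closed up by the ascent out of `0`, and the elements
`> j`, which together with the new top form a cycle whose only ascent is the arrow into the top.
Two cycles separated by a threshold cannot cross, and a crossing with the new top would give one
with the cycle of `0` already in `α`. If instead `j` lies in another cycle of `α`, then `[α, j]`
merges that cycle with the one of `0`, and the result has two ascents: out of `0` and into the
new top.
-/

open Equiv Finset

namespace Equiv.Perm

section SameCycle

variable {X Y : Type*} {f : Perm X} {x y : X}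

theorem sameCycle_self_apply (f : Perm X) (x : X) : f.SameCycle x (f x) :=
  sameCycle_apply_right.2 (SameCycle.refl f x)

variable [Finite X]

theorem SameCycle.induction_on_apply {P : X → Prop} (hxy : f.SameCycle x y) (hx : P x)
    (hstep : ∀ u, f.SameCycle x u → P u → P (f u)) : P y := by
  obtain ⟨k, rfl⟩ := hxy.exists_nat_pow_eq
  clear hxy
  induction k with
  | zero => exact hx
  | succ k ih =>
    rw [pow_succ', mul_apply]
    exact hstep _ (sameCycle_pow_right.2 (SameCycle.refl f x)) ih

theorem SameCycle.map {g : Perm Y} (φ : X → Y) (hxy : f.SameCycle x y)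
    (hφ : ∀ u, f.SameCycle x u → g.SameCycle (φ u) (φ (f u))) : g.SameCycle (φ x) (φ y) :=
  hxy.induction_on_apply (P := fun v => g.SameCycle (φ x) (φ v)) (SameCycle.refl g (φ x))
    fun u hu h => h.trans (hφ u hu)

theorem SameCycle.map_of_semiconj {g : Perm Y} (φ : X → Y) (hxy : f.SameCycle x y)
    (hφ : ∀ u, f.SameCycle x u → g (φ u) = φ (f u)) : g.SameCycle (φ x) (φ y) :=
  hxy.map φ fun u hu => hφ u hu ▸ sameCycle_self_apply g (φ u)

end SameCycle

section LinearOrder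

variable {X : Type*} [LinearOrder X] {f : Perm X} {x y : X}

def AscentsAtCycleMin (f : Perm X) : Prop :=
  ∀ x y, x < f x → f.SameCycle x y → x ≤ y

theorem exists_sameCycle_min_lt_apply [Fintype X] (hx : f x ≠ x) :
    ∃ m, f.SameCycle x m ∧ m < f m ∧ ∀ y, f.SameCycle x y → m ≤ y := by
  obtain ⟨m, hm, hmin⟩ :=
    (univ.filter (f.SameCycle x)).exists_min_image id ⟨x, by simp [SameCycle.refl]⟩
  simp only [mem_filter, mem_univ, true_and, id] at hm hmin
  refine ⟨m, hm, lt_of_le_of_ne (hmin _ (sameCycle_apply_right.2 hm)) fun hfm => ?_, hmin⟩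
  exact hx (hm.apply_eq_self_iff.2 hfm.symm)

theorem support_cycleOf_filter_lt [Fintype X] (f : Perm X) (x : X) :
    (f.cycleOf x).support.filter (fun y => y < f.cycleOf x y) =
      univ.filter (fun y => f.SameCycle x y ∧ y < f y) := by
  ext y
  by_cases hxy : f.SameCycle x y
  · simp only [mem_filter, hxy.cycleOf_apply, mem_univ, true_and, hxy, mem_support,
      and_iff_right_iff_imp]
    exact fun h => h.ne'
  · simp [hxy, cycleOf_apply]

namespace AscentsAtCycleMin

variable (h : f.AscentsAtCycleMin)
include h

theorem eq_of_lt_apply (hx : x < f x) (hy : y < f y) (hxy : f.SameCycle x y) : x = y :=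
  le_antisymm (h x y hx hxy) (h y x hy hxy.symm)

theorem apply_lt (hxy : f.SameCycle x y) (hyx : y < x) : f x < x := by
  rcases lt_trichotomy (f x) x with hlt | heq | hgt
  · exact hlt
  · exact absurd (hxy.eq_of_left heq) hyx.ne'
  · exact absurd (h x y hgt hxy) hyx.not_ge

theorem le_apply_of_lt [Fintype X] (hxy : f.SameCycle x y) (hyx : y < x) : y ≤ f x := by
  classical
  by_contra! hfx
  -- `U` is entered only along the single ascent of the cycle, but it is left at `x` and at `y`.
  set U := univ.filter fun u => f.SameCycle y u ∧ y ≤ u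
  have hU : ∀ u, u ∈ U ↔ f.SameCycle y u ∧ y ≤ u := by simp [U]
  have hin : #(U \ U.map f.toEmbedding) ≤ 1 := by
    have hasc : ∀ u ∈ U \ U.map f.toEmbedding,
        f.symm u < f (f.symm u) ∧ f.SameCycle y (f.symm u) := by
      intro u hu
      simp only [mem_sdiff, mem_map_equiv, hU, sameCycle_symm_apply_right, not_and, not_le] at hu
      rw [apply_symm_apply]
      exact ⟨(hu.2 hu.1.1).trans_le hu.1.2, sameCycle_symm_apply_right.2 hu.1.1⟩
    refine card_le_one.2 fun u hu v hv => f.symm.injective ?_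
    exact h.eq_of_lt_apply (hasc u hu).1 (hasc v hv).1 ((hasc u hu).2.symm.trans (hasc v hv).2)
  have hfy : f y < y := h.apply_lt (hxy.symm.trans (sameCycle_self_apply f x)) hfx
  have hout : 1 < #(U.map f.toEmbedding \ U) := by
    refine one_lt_card.2 ⟨f x, ?_, f y, ?_, fun hxy' => hyx.ne' (f.injective hxy')⟩ <;>
      simp only [mem_sdiff, mem_map_equiv, symm_apply_apply, hU, not_and, not_le]
    · exact ⟨⟨hxy.symm, hyx.le⟩, fun _ => hfx⟩
    · exact ⟨⟨SameCycle.refl f y, le_rfl⟩, fun _ => hfy⟩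
  have := card_sdiff_comm (card_map (s := U) f.toEmbedding)
  omega

end AscentsAtCycleMin

theorem forall_card_filter_lt_eq_one_iff [Fintype X] :
    (∀ c ∈ f.cycleFactorsFinset, #(c.support.filter fun y => y < c y) = 1) ↔
      f.AscentsAtCycleMin := by
  constructor
  · intro h x y hx hxy
    obtain ⟨m, hm, hmlt, hmin⟩ := exists_sameCycle_min_lt_apply hx.ne'
    have hcard := h _ (cycleOf_mem_cycleFactorsFinset_iff.2 (mem_support.2 hx.ne'))
    rw [support_cycleOf_filter_lt] at hcard
    have hxm : x = m :=
      card_le_one.1 hcard.le x (by simp [hx, SameCycle.refl]) m (by simp [hm, hmlt])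
    exact hxm ▸ hmin y hxy
  · intro h c hc
    obtain ⟨x, hx⟩ := (mem_cycleFactorsFinset_iff.1 hc).1.nonempty_support
    obtain rfl := cycle_is_cycleOf hx hc
    obtain ⟨m, hm, hmlt, -⟩ :=
      exists_sameCycle_min_lt_apply (mem_support.1 (mem_cycleFactorsFinset_support_le hc hx))
    rw [support_cycleOf_filter_lt, card_eq_one]
    refine ⟨m, eq_singleton_iff_unique_mem.2 ⟨by simp [hm, hmlt], fun y hy => ?_⟩⟩
    simp only [mem_filter, mem_univ, true_and] at hy
    exact h.eq_of_lt_apply hy.2 hmlt (hy.1.symm.trans hm)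

end LinearOrder

end Equiv.Perm

open Equiv.Perm

def NoncrossingCycles {m : ℕ} (α : Perm (Fin m)) : Prop :=
  ∀ x y : Fin m, ¬ α.SameCycle x y → ¬ Crossing {z | α.SameCycle x z} {z | α.SameCycle y z}

theorem satisfiesStar_iff {m : ℕ} (α : Perm (Fin m)) :
    SatisfiesStar α ↔ α.AscentsAtCycleMin ∧ NoncrossingCycles α :=
  and_congr_left' forall_card_filter_lt_eq_one_iff

/-- `β` is `α` with the cycle of `0` cut at `t`: its elements below `t` form one cycle of `β`, and
those from `t` on form another one together with the new top `Fin.last`; the other cycles of `α`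
are kept. -/
structure SplitsChainAt {n : ℕ} (α : Perm (Fin (n + 1))) (β : Perm (Fin (n + 2))) (t : ℕ) :
    Prop where
  sameCycle_castSucc_iff (x y : Fin (n + 1)) : β.SameCycle x.castSucc y.castSucc ↔
    α.SameCycle x y ∧ (α.SameCycle 0 x → (x.val < t ↔ y.val < t))
  sameCycle_last_iff (y : Fin (n + 1)) :
    β.SameCycle (Fin.last _) y.castSucc ↔ α.SameCycle 0 y ∧ t ≤ y.val
  apply_castSucc (x : Fin (n + 1)) : x ≠ 0 →
    β x.castSucc = (α x).castSucc ∨ (β x.castSucc = Fin.last _ ∧ (α x).val < t)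

namespace SplitsChainAt

variable {n : ℕ} {α : Perm (Fin (n + 1))} {β : Perm (Fin (n + 2))} {t : ℕ}
  (h : SplitsChainAt α β t)
include h

theorem ascentsAtCycleMin (hα : α.AscentsAtCycleMin) : β.AscentsAtCycleMin := by
  intro I K hI hIK
  obtain ⟨x, rfl⟩ := Fin.eq_castSucc_of_ne_last (hI.trans_le (Fin.le_last _)).ne
  obtain ⟨y, rfl⟩ | rfl := Fin.eq_castSucc_or_eq_last K
  swap
  · exact Fin.le_last _
  rw [Fin.castSucc_le_castSucc_iff]
  rcases eq_or_ne x 0 with rfl | hx0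
  · exact Fin.zero_le y
  rcases h.apply_castSucc x hx0 with hβx | ⟨hβx, hαx⟩
  · rw [hβx, Fin.castSucc_lt_castSucc_iff] at hI
    exact hα x y hI ((h.sameCycle_castSucc_iff x y).1 hIK).1
  · have hxtop : β.SameCycle (Fin.last _) x.castSucc := hβx ▸ (sameCycle_self_apply β _).symm
    obtain ⟨hx, -⟩ := (h.sameCycle_last_iff x).1 hxtop
    obtain ⟨hy, hty⟩ := (h.sameCycle_last_iff y).1 (hxtop.trans hIK)
    refine not_lt.1 fun hyx => ?_
    have := hα.le_apply_of_lt (hx.symm.trans hy) hyx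
    rw [Fin.le_def] at this
    omega

theorem sameCycle_of_lt_of_lt (hα : NoncrossingCycles α) {a b c : Fin (n + 1)} {d : Fin (n + 2)}
    (hab : a < b) (hbc : b < c) (hcd : c.castSucc < d)
    (hac : β.SameCycle a.castSucc c.castSucc) (hbd : β.SameCycle b.castSucc d) :
    β.SameCycle a.castSucc b.castSucc := by
  obtain ⟨hac', hact⟩ := (h.sameCycle_castSucc_iff a c).1 hac
  obtain ⟨d, rfl⟩ | rfl := Fin.eq_castSucc_or_eq_last d
  · obtain ⟨hbd', hbdt⟩ := (h.sameCycle_castSucc_iff b d).1 hbd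
    rw [Fin.castSucc_lt_castSucc_iff] at hcd
    have hab' : α.SameCycle a b := by
      by_contra hn
      exact hα a b hn ⟨a, b, c, d, hab, hbc, hcd, .refl _ _, hac', .refl _ _, hbd'⟩
    refine (h.sameCycle_castSucc_iff a b).2 ⟨hab', fun h0a => ?_⟩
    have := hact h0a
    have := hbdt (h0a.trans hab')
    rw [Fin.lt_def] at hab hbc hcd
    omega
  · obtain ⟨h0b, htb⟩ := (h.sameCycle_last_iff b).1 hbd.symm
    by_cases h0a : α.SameCycle 0 a
    · have htc : β.SameCycle (Fin.last _) c.castSucc :=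
        (h.sameCycle_last_iff c).2 ⟨h0a.trans hac', by rw [Fin.lt_def] at hbc; omega⟩
      exact hac.trans (htc.symm.trans hbd.symm)
    · have ha0 : 0 < a := Fin.pos_iff_ne_zero.2 fun ha => h0a (ha ▸ .refl _ _)
      exact absurd ⟨0, a, b, c, ha0, hab, hbc, .refl _ _, h0b, .refl _ _, hac'⟩ (hα 0 a h0a)

theorem noncrossingCycles (hα : NoncrossingCycles α) : NoncrossingCycles β := by
  rintro X Y hXY ⟨a, b, c, d, hab, hbc, hcd, ha, hc, hb, hd⟩
  simp only [Set.mem_ofPred_eq] at ha hb hc hd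
  obtain ⟨a, rfl⟩ := Fin.eq_castSucc_of_ne_last (Fin.ne_last_of_lt (hab.trans (hbc.trans hcd)))
  obtain ⟨b, rfl⟩ := Fin.eq_castSucc_of_ne_last (Fin.ne_last_of_lt (hbc.trans hcd))
  obtain ⟨c, rfl⟩ := Fin.eq_castSucc_of_ne_last (Fin.ne_last_of_lt hcd)
  rw [Fin.castSucc_lt_castSucc_iff] at hab hbc
  exact hXY <| ha.trans <| (h.sameCycle_of_lt_of_lt hα hab hbc hcd (ha.symm.trans hc)
    (hb.symm.trans hd)).trans hb.symm

theorem satisfiesStar (hα : SatisfiesStar α) : SatisfiesStar β := by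
  rw [satisfiesStar_iff] at hα ⊢
  exact ⟨h.ascentsAtCycleMin hα.1, h.noncrossingCycles hα.2⟩

end SplitsChainAt

section InsPerm

variable {n : ℕ} (α : Perm (Fin (n + 1)))

theorem liftPerm_castSucc {m : ℕ} (α : Perm (Fin m)) (i : Fin m) :
    liftPerm α i.castSucc = (α i).castSucc := by
  simp [liftPerm, Equiv.permCongr_apply]

theorem liftPerm_last {m : ℕ} (α : Perm (Fin m)) : liftPerm α (Fin.last m) = Fin.last m := by
  simp [liftPerm, Equiv.permCongr_apply]

theorem chainExt_zero {m : ℕ} (α : Perm (Fin m)) : chainExt α 0 = Fin.last m := by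
  simp [chainExt, liftPerm_last]

theorem chainExt_last : chainExt α (Fin.last _) = (α 0).castSucc := by
  simp [chainExt, ← liftPerm_castSucc]

theorem chainExt_castSucc {i : Fin (n + 1)} (hi : i ≠ 0) :
    chainExt α i.castSucc = (α i).castSucc := by
  rw [chainExt, mul_apply, swap_apply_of_ne_of_ne (by simpa using hi) (Fin.castSucc_ne_last i),
    liftPerm_castSucc]

theorem insPerm_some_zero (j : Fin (n + 1)) : insPerm α (some j) 0 = j.castSucc := by
  simp [insPerm, chainExt_zero]

theorem insPerm_some_castSucc {i j : Fin (n + 1)} (hi : i ≠ 0) (hij : α i ≠ j) :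
    insPerm α (some j) i.castSucc = (α i).castSucc := by
  rw [insPerm, mul_apply, chainExt_castSucc α hi,
    swap_apply_of_ne_of_ne (Fin.castSucc_ne_last _) (by simpa using hij)]

theorem insPerm_some_castSucc_of_apply_eq {i j : Fin (n + 1)} (hi : i ≠ 0) (hij : α i = j) :
    insPerm α (some j) i.castSucc = Fin.last _ := by
  rw [insPerm, mul_apply, chainExt_castSucc α hi, hij, swap_apply_right]

def collapseLast (w : Fin (n + 2)) : Fin (n + 1) :=
  Fin.lastCases 0 id w

@[simp]
theorem collapseLast_last : collapseLast (Fin.last (n + 1)) = 0 :=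
  Fin.lastCases_last

@[simp]
theorem collapseLast_castSucc (i : Fin (n + 1)) : collapseLast i.castSucc = i :=
  Fin.lastCases_castSucc i

theorem sameCycle_collapseLast_chainExt (w : Fin (n + 2)) :
    α.SameCycle (collapseLast w) (collapseLast (chainExt α w)) := by
  obtain ⟨i, rfl⟩ | rfl := Fin.eq_castSucc_or_eq_last w
  · rcases eq_or_ne i 0 with rfl | hi
    · rw [collapseLast_castSucc, Fin.castSucc_zero, chainExt_zero, collapseLast_last]
    · simpa [chainExt_castSucc α hi] using sameCycle_self_apply α i
  · simpa [chainExt_last] using sameCycle_self_apply α 0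

theorem sameCycle_collapseLast_swap {j : Fin (n + 1)} (hj : α.SameCycle 0 j) (w : Fin (n + 2)) :
    α.SameCycle (collapseLast w) (collapseLast (swap (Fin.last _) j.castSucc w)) := by
  rcases eq_or_ne w (Fin.last _) with rfl | hw
  · simpa using hj
  rcases eq_or_ne w j.castSucc with rfl | hwj
  · simpa using hj.symm
  · rw [swap_apply_of_ne_of_ne hw hwj]

theorem sameCycle_collapseLast_insPerm {j : Option (Fin (n + 1))}
    (hj : ∀ j' ∈ j, α.SameCycle 0 j') {w w' : Fin (n + 2)} (hw : (insPerm α j).SameCycle w w') :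
    α.SameCycle (collapseLast w) (collapseLast w') := by
  refine hw.map collapseLast fun u _ => ?_
  cases j with
  | none => exact sameCycle_collapseLast_chainExt α u
  | some j =>
    exact (sameCycle_collapseLast_chainExt α u).trans (sameCycle_collapseLast_swap α (hj j rfl) _)

theorem sameCycle_last_insPerm_none {y : Fin (n + 1)} (hy : α.SameCycle 0 y) :
    (insPerm α none).SameCycle (Fin.last _) y.castSucc := by
  have h0 : (insPerm α none).SameCycle (Fin.last _) 0 :=
    chainExt_zero α ▸ (sameCycle_self_apply _ 0).symm
  refine h0.trans (hy.map (g := insPerm α none) Fin.castSucc fun u _ => ?_)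
  rcases eq_or_ne u 0 with rfl | hu
  · rw [← chainExt_last]
    exact h0.symm.trans (sameCycle_self_apply _ _)
  · exact chainExt_castSucc α hu ▸ sameCycle_self_apply _ _

theorem splitsChainAt_insPerm_none : SplitsChainAt α (insPerm α none) 0 where
  sameCycle_castSucc_iff x y := by
    refine ⟨fun hxy => ⟨by simpa using sameCycle_collapseLast_insPerm α (by simp) hxy, by simp⟩,
      fun ⟨hxy, _⟩ => ?_⟩
    by_cases h0x : α.SameCycle 0 x
    · exact (sameCycle_last_insPerm_none α h0x).symm.trans
        (sameCycle_last_insPerm_none α (h0x.trans hxy))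
    · refine hxy.map_of_semiconj _ fun u hu => chainExt_castSucc α ?_
      rintro rfl
      exact h0x hu.symm
  sameCycle_last_iff y :=
    ⟨fun hy => ⟨by simpa using sameCycle_collapseLast_insPerm α (by simp) hy, Nat.zero_le _⟩,
      fun ⟨hy, _⟩ => sameCycle_last_insPerm_none α hy⟩
  apply_castSucc x hx := Or.inl (chainExt_castSucc α hx)

section Chain

variable {α} {j : Fin (n + 1)} (hα : α.AscentsAtCycleMin)
include hα

theorem sameCycle_zero_insPerm_some_of_le {u : Fin (n + 1)} (hu : α.SameCycle 0 u) (huj : u ≤ j) :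
    (insPerm α (some j)).SameCycle 0 u.castSucc := by
  induction u using WellFoundedLT.induction with
  | _ u ih =>
  rcases eq_or_ne u 0 with rfl | hu0
  · exact .refl _ _
  have hlt : α u < u := hα.apply_lt hu.symm (Fin.pos_iff_ne_zero.2 hu0)
  have hstep := insPerm_some_castSucc α hu0 (hlt.trans_le huj).ne
  exact (ih _ hlt (hu.trans (sameCycle_self_apply α u)) (hlt.le.trans huj)).trans
    (hstep ▸ (sameCycle_self_apply _ _).symm)

theorem sameCycle_last_insPerm_some_of_lt (hj : α.SameCycle 0 j) {u : Fin (n + 1)}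
    (hu : α.SameCycle 0 u) (hju : j < u) :
    (insPerm α (some j)).SameCycle (Fin.last _) u.castSucc := by
  induction u using WellFoundedLT.induction with
  | _ u ih =>
  have hu0 : u ≠ 0 := ((Fin.zero_le j).trans_lt hju).ne'
  rcases eq_or_ne (α u) j with hαu | hαu
  · exact insPerm_some_castSucc_of_apply_eq α hu0 hαu ▸ (sameCycle_self_apply _ _).symm
  have hlt : α u < u := hα.apply_lt hu.symm (Fin.pos_iff_ne_zero.2 hu0)
  have hjαu : j < α u := (hα.le_apply_of_lt (hu.symm.trans hj) hju).lt_of_ne' hαu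
  exact (ih _ hlt (hu.trans (sameCycle_self_apply α u)) hjαu).trans
    (insPerm_some_castSucc α hu0 hαu ▸ (sameCycle_self_apply _ _).symm)

theorem not_sameCycle_zero_last_insPerm_some (hj : α.SameCycle 0 j) :
    ¬ (insPerm α (some j)).SameCycle 0 (Fin.last _) := by
  intro h
  obtain ⟨u, -, -, hu⟩ := h.induction_on_apply
    (P := fun w => ∃ u, α.SameCycle 0 u ∧ u ≤ j ∧ w = u.castSucc) ⟨0, .refl _ _, Fin.zero_le j, rfl⟩
    fun w _ ⟨u, hu, huj, hw⟩ => by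
      subst hw
      rcases eq_or_ne u 0 with rfl | hu0
      · exact ⟨j, hj, le_rfl, insPerm_some_zero α j⟩
      have hlt : α u < u := hα.apply_lt hu.symm (Fin.pos_iff_ne_zero.2 hu0)
      exact ⟨α u, hu.trans (sameCycle_self_apply α u), hlt.le.trans huj,
        insPerm_some_castSucc α hu0 (hlt.trans_le huj).ne⟩
  exact Fin.castSucc_ne_last u hu.symm

theorem sameCycle_zero_insPerm_some_iff (hj : α.SameCycle 0 j) {u : Fin (n + 1)}
    (hu : α.SameCycle 0 u) : (insPerm α (some j)).SameCycle 0 u.castSucc ↔ u ≤ j :=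
  ⟨fun h0u => not_lt.1 fun hju => not_sameCycle_zero_last_insPerm_some hα hj
    (h0u.trans (sameCycle_last_insPerm_some_of_lt hα hj hu hju).symm),
    sameCycle_zero_insPerm_some_of_le hα hu⟩

theorem sameCycle_last_insPerm_some_iff (hj : α.SameCycle 0 j) {u : Fin (n + 1)}
    (hu : α.SameCycle 0 u) : (insPerm α (some j)).SameCycle (Fin.last _) u.castSucc ↔ j < u :=
  ⟨fun htu => not_le.1 fun huj => not_sameCycle_zero_last_insPerm_some hα hj
    ((sameCycle_zero_insPerm_some_of_le hα hu huj).trans htu.symm),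
    sameCycle_last_insPerm_some_of_lt hα hj hu⟩

theorem splitsChainAt_insPerm_some (hj : α.SameCycle 0 j) :
    SplitsChainAt α (insPerm α (some j)) (j.val + 1) where
  sameCycle_castSucc_iff x y := by
    by_cases h0x : α.SameCycle 0 x
    · have hside : ∀ y, α.SameCycle 0 y → (y.val < j.val + 1 ↔ y ≤ j) := fun y _ => by
        rw [Fin.le_def]; omega
      constructor
      · intro hxy
        have hαxy : α.SameCycle x y := by
          simpa using sameCycle_collapseLast_insPerm α (by simpa using hj) hxy
        have h0y := h0x.trans hαxy
        rw [hside x h0x, hside y h0y, ← sameCycle_zero_insPerm_some_iff hα hj h0x,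
          ← sameCycle_zero_insPerm_some_iff hα hj h0y]
        exact ⟨hαxy, fun _ => ⟨fun h => h.trans hxy, fun h => h.trans hxy.symm⟩⟩
      · rintro ⟨hxy, hxyj⟩
        have h0y := h0x.trans hxy
        rw [hside x h0x, hside y h0y] at hxyj
        rcases le_or_gt x j with hxj | hjx
        · exact ((sameCycle_zero_insPerm_some_iff hα hj h0x).2 hxj).symm.trans
            ((sameCycle_zero_insPerm_some_iff hα hj h0y).2 ((hxyj h0x).1 hxj))
        · exact ((sameCycle_last_insPerm_some_iff hα hj h0x).2 hjx).symm.trans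
            ((sameCycle_last_insPerm_some_iff hα hj h0y).2
              (not_le.1 fun hyj => hjx.not_ge ((hxyj h0x).2 hyj)))
    · refine ⟨fun hxy => ⟨by simpa using sameCycle_collapseLast_insPerm α (by simpa using hj) hxy,
        fun h => absurd h h0x⟩, fun ⟨hxy, _⟩ => ?_⟩
      refine hxy.map_of_semiconj _ fun u hu => insPerm_some_castSucc α ?_ fun hαu => ?_
      · rintro rfl
        exact h0x hu.symm
      · exact h0x (hj.trans (hαu ▸ hu.trans (sameCycle_self_apply α u)).symm)
  sameCycle_last_iff y := by
    constructor
    · intro hy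
      have h0y : α.SameCycle 0 y := by
        simpa using sameCycle_collapseLast_insPerm α (by simpa using hj) hy
      have := (sameCycle_last_insPerm_some_iff hα hj h0y).1 hy
      rw [Fin.lt_def] at this
      exact ⟨h0y, this⟩
    · rintro ⟨h0y, hjy⟩
      exact (sameCycle_last_insPerm_some_iff hα hj h0y).2 (by rw [Fin.lt_def]; omega)
  apply_castSucc x hx := by
    by_cases hαx : α x = j
    · exact Or.inr ⟨insPerm_some_castSucc_of_apply_eq α hx hαx, by rw [hαx]; omega⟩
    · exact Or.inl (insPerm_some_castSucc α hx hαx)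

end Chain

theorem not_ascentsAtCycleMin_insPerm_some {j : Fin (n + 1)} (hj : ¬ α.SameCycle 0 j) :
    ¬ (insPerm α (some j)).AscentsAtCycleMin := by
  intro hβ
  set p := α.symm j
  have hαp : α p = j := α.apply_symm_apply j
  have hjp : α.SameCycle j p := sameCycle_symm_apply_right.2 (.refl _ _)
  have hp0 : p ≠ 0 := by
    rintro hp
    exact hj (hp ▸ hjp.symm)
  have h0j : (insPerm α (some j)).SameCycle 0 j.castSucc :=
    insPerm_some_zero α j ▸ sameCycle_self_apply _ 0
  have hjp' : (insPerm α (some j)).SameCycle j.castSucc p.castSucc := by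
    refine hjp.induction_on_apply
      (P := fun v => (insPerm α (some j)).SameCycle j.castSucc v.castSucc) (.refl _ _)
      fun v hv hjv => ?_
    rcases eq_or_ne (α v) j with hαv | hαv
    · exact hαv ▸ .refl _ _
    have hv0 : v ≠ 0 := by
      rintro rfl
      exact hj hv.symm
    exact hjv.trans (insPerm_some_castSucc α hv0 hαv ▸ sameCycle_self_apply _ _)
  -- the arrow out of `p` into the new top is a second ascent in the cycle of `0`
  have hasc : p.castSucc < insPerm α (some j) p.castSucc := by
    rw [insPerm_some_castSucc_of_apply_eq α hp0 hαp]
    exact Fin.castSucc_lt_last p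
  have := hβ _ 0 hasc (h0j.trans hjp').symm
  exact hp0 (by simpa [Fin.le_def] using this)

end InsPerm

/-- Let `α` satisfy condition (*) and `β = [α, j]`.  Then `β` satisfies condition (*)
iff `j = 0` (here `j = none`) or `j` is a vertex of the chain of `Q̂_α`, i.e. `j` lies
in the cycle of `α` containing the distinguished element (here `0`). -/
theorem insPerm_star_iff (n : ℕ) (α : Equiv.Perm (Fin (n + 1))) (hα : SatisfiesStar α)
    (j : Option (Fin (n + 1))) :
    SatisfiesStar (insPerm α j) ↔
      (j = none ∨ ∃ j', j = some j' ∧ α.SameCycle 0 j') := by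
  cases j with
  | none => simpa using (splitsChainAt_insPerm_none α).satisfiesStar hα
  | some j =>
    simp only [reduceCtorEq, Option.some.injEq, exists_eq_left', false_or]
    refine ⟨fun hβ => ?_, fun hj => ?_⟩
    · by_contra hj
      exact not_ascentsAtCycleMin_insPerm_some α hj ((satisfiesStar_iff _).1 hβ).1
    · exact (splitsChainAt_insPerm_some ((satisfiesStar_iff α).1 hα).1 hj).satisfiesStar hα
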